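/- (Lemma 2.6, local existence and uniqueness.) Let h, l : [0,∞) → [0,∞) be continuous and let f, g : ℝ → [0,∞) be locally Lipschitz continuous. Then for every u₀ ∈ C_b(ℝ^N) there exist T > 0 and a unique u ∈ C([0,T], C_b(ℝ^N)) such that u(t) = S(t)u₀ + ∫_0^t S(t−σ)[h(σ)f(u(σ)) + l(σ)g(u(σ))] dσ for all t ∈ [0,T]. -/

import Mathlib

open MeasureTheory Real Set Metric Filter

noncomputable section

/-- `ℝ^N`. -/
abbrev EucN (N : ℕ) := EuclideanSpace ℝ (Fin N)

/-- `C_b(ℝ^N)`, the bounded continuous functions with the sup norm. -/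
abbrev CbN (N : ℕ) := BoundedContinuousFunction (EucN N) ℝ

/-- `u ∈ C([0,T], C_b(ℝ^N))` satisfies the Duhamel (mild) formulation
`u(t) = S(t)u₀ + ∫_0^t S(t-σ)[h(σ) f(u(σ)) + l(σ) g(u(σ))] dσ` on `[0,T]`,
written pointwise via the kernel `Γ`. -/
def IsMildOnIcc (N : ℕ) (Γ : EucN N → EucN N → ℝ → ℝ)
    (h l f g : ℝ → ℝ) (u₀ : CbN N) (T : ℝ) (u : ℝ → CbN N) : Prop :=
  ContinuousOn u (Icc (0 : ℝ) T) ∧ u 0 = u₀ ∧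
    ∀ t ∈ Ioc (0 : ℝ) T, ∀ x,
      u t x = (∫ y, Γ x y t * u₀ y) +
        ∫ σ in (0 : ℝ)..t, ∫ y, Γ x y (t - σ) *
          (h σ * f (u σ y) + l σ * g (u σ y))

/-!
Cutting `f` and `g` off outside `[-M, M]`, `M = ‖u₀‖ + 1`, turns the source term into a globally
Lipschitz and bounded map on `C_b(ℝ^N)`. Since `Γ ≥ 0` and `∫ Γ(x, y, t) dy = 1`, every `S(t)` is
1-Lipschitz on `C_b(ℝ^N)`, so for small `T` the Duhamel map is a contraction of
`C([0, T], C_b(ℝ^N))`; its fixed point stays in the ball of radius `M`, where the cut-off is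
inactive, hence is a mild solution. Two mild solutions are fixed points of the Duhamel map for a
common cut-off level, and Gronwall's inequality applied to `‖u(t) - v(t)‖` shows that they agree.
-/

open Function
open scoped NNReal

theorem eqOn_zero_of_le_mul_integral {e : ℝ → ℝ} {C T : ℝ} (he : ContinuousOn e (Icc 0 T))
    (he_nonneg : ∀ t ∈ Icc 0 T, 0 ≤ e t)
    (he_le : ∀ t ∈ Icc 0 T, e t ≤ C * ∫ σ in (0 : ℝ)..t, e σ) :
    ∀ t ∈ Icc 0 T, e t = 0 := by
  obtain hT | hT := lt_or_ge T 0
  · simp [Icc_eq_empty hT.not_ge]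
  have hE_nonneg : ∀ t ∈ Icc 0 T, 0 ≤ ∫ σ in (0 : ℝ)..t, e σ := fun t ht =>
    intervalIntegral.integral_nonneg ht.1 fun σ hσ => he_nonneg σ ⟨hσ.1, hσ.2.trans ht.2⟩
  have hE_deriv : ∀ t ∈ Ico 0 T,
      HasDerivWithinAt (fun t => ∫ σ in (0 : ℝ)..t, e σ) (e t) (Ici t) t := by
    intro t ht
    have : Fact (t ∈ Icc 0 T) := ⟨Ico_subset_Icc_self ht⟩
    exact (intervalIntegral.integral_hasDerivWithinAt_right (s := Icc 0 T) (t := Icc 0 T)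
      ((he.mono (Icc_subset_Icc_right ht.2.le)).intervalIntegrable_of_Icc ht.1)
      (he.stronglyMeasurableAtFilter_nhdsWithin measurableSet_Icc t)
      (he t this.out)).mono_of_mem_nhdsWithin (Icc_mem_nhdsGE_of_mem ht)
  have hE_zero : ∀ t ∈ Icc 0 T, ∫ σ in (0 : ℝ)..t, e σ = 0 := by
    refine eq_zero_of_abs_deriv_le_mul_abs_self_of_eq_zero_right (K := C) ?_ hE_deriv
      intervalIntegral.integral_same fun t ht => ?_
    · rw [← uIcc_of_le hT] at he ⊢
      exact intervalIntegral.continuousOn_primitive_interval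
        (he.integrableOn_compact isCompact_uIcc)
    · have ht' := Ico_subset_Icc_self ht
      rw [Real.norm_of_nonneg (he_nonneg t ht'), Real.norm_of_nonneg (hE_nonneg t ht')]
      exact he_le t ht'
  intro t ht
  refine le_antisymm ?_ (he_nonneg t ht)
  simpa [hE_zero t ht] using he_le t ht

theorem continuous_uncurry_max_zero {α β : Type*} [PseudoEMetricSpace α] [PseudoEMetricSpace β]
    {S : ℝ → α → β} {K : ℝ≥0} (hS : ∀ φ, ContinuousOn (fun t => S t φ) (Ici 0))
    (hS_lip : ∀ t, 0 ≤ t → LipschitzWith K (S t)) : Continuous (uncurry fun t => S (max t 0)) :=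
  (continuousOn_prod_of_continuousOn_lipschitzOnWith' (uncurry S) (s := Ici 0) (t := univ) K
    (fun t ht => (hS_lip t ht).lipschitzOnWith) fun φ _ => hS φ).comp_continuous
    ((continuous_fst.max continuous_const).prodMk continuous_snd)
    fun p => ⟨le_max_right p.1 0, mem_univ p.2⟩

section Duhamel

variable {E : Type*} [NormedAddCommGroup E] {S G : ℝ → E → E}

theorem intervalIntegrable_duhamel_integrand (hS : Continuous (uncurry S))
    (hG : Continuous (uncurry G)) {u : ℝ → E} {T t : ℝ} (hu : ContinuousOn u (Icc 0 T))
    (ht : t ∈ Icc 0 T) :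
    IntervalIntegrable (fun σ => S (t - σ) (G σ (u σ))) volume 0 t := by
  refine ContinuousOn.intervalIntegrable ?_
  rw [uIcc_of_le ht.1]
  exact hS.comp_continuousOn <| (continuous_const.sub continuous_id).continuousOn.prodMk <|
    hG.comp_continuousOn <| continuousOn_id.prodMk (hu.mono (Icc_subset_Icc_right ht.2))

variable [NormedSpace ℝ E]

def duhamel (S G : ℝ → E → E) (u₀ : E) (u : ℝ → E) (t : ℝ) : E :=
  S t u₀ + ∫ σ in (0 : ℝ)..t, S (t - σ) (G σ (u σ))

theorem continuous_duhamel (hS : Continuous (uncurry S)) (hG : Continuous (uncurry G))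
    (u₀ : E) {u : ℝ → E} (hu : Continuous u) : Continuous (duhamel S G u₀ u) := by
  have hf : Continuous (uncurry fun t σ => S (t - σ) (G σ (u σ))) :=
    hS.comp <| (continuous_fst.sub continuous_snd).prodMk <|
      hG.comp <| continuous_snd.prodMk (hu.comp continuous_snd)
  exact (hS.comp (continuous_id.prodMk continuous_const)).add <|
    intervalIntegral.continuous_parametric_intervalIntegral_of_continuous hf continuous_id

theorem norm_duhamel_le (hS_lip : ∀ t, LipschitzWith 1 (S t)) (hS_zero : ∀ t, S t 0 = 0)
    {B T : ℝ} (hG_le : ∀ τ ∈ Icc 0 T, ∀ a, ‖G τ a‖ ≤ B) (u₀ : E) (u : ℝ → E) {t : ℝ}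
    (ht : t ∈ Icc 0 T) : ‖duhamel S G u₀ u t‖ ≤ ‖u₀‖ + B * t := by
  have hS_norm : ∀ σ a, ‖S σ a‖ ≤ ‖a‖ := fun σ a => by
    simpa [hS_zero] using (hS_lip σ).norm_sub_le a 0
  have hbound : ∀ σ ∈ uIoc 0 t, ‖S (t - σ) (G σ (u σ))‖ ≤ B := fun σ hσ => by
    rw [uIoc_of_le ht.1] at hσ
    exact (hS_norm _ _).trans (hG_le σ ⟨hσ.1.le, hσ.2.trans ht.2⟩ _)
  refine norm_add_le_of_le (hS_norm t u₀) ?_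
  simpa [abs_of_nonneg ht.1] using intervalIntegral.norm_integral_le_of_norm_le_const hbound

theorem norm_duhamel_sub_le (hS : Continuous (uncurry S)) (hS_lip : ∀ t, LipschitzWith 1 (S t))
    (hG : Continuous (uncurry G)) {K : ℝ≥0} {T : ℝ}
    (hG_lip : ∀ τ ∈ Icc 0 T, LipschitzWith K (G τ)) (u₀ : E) {u v : ℝ → E}
    (hu : ContinuousOn u (Icc 0 T)) (hv : ContinuousOn v (Icc 0 T)) {t : ℝ} (ht : t ∈ Icc 0 T) :
    ‖duhamel S G u₀ u t - duhamel S G u₀ v t‖ ≤ K * ∫ σ in (0 : ℝ)..t, ‖u σ - v σ‖ := by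
  have hsub_int : IntervalIntegrable (fun σ => ‖u σ - v σ‖) volume 0 t :=
    ((hu.sub hv).norm.mono (Icc_subset_Icc_right ht.2)).intervalIntegrable_of_Icc ht.1
  rw [duhamel, duhamel, add_sub_add_left_eq_sub, ← intervalIntegral.integral_sub
    (intervalIntegrable_duhamel_integrand hS hG hu ht)
    (intervalIntegrable_duhamel_integrand hS hG hv ht)]
  rw [← intervalIntegral.integral_const_mul]
  refine intervalIntegral.norm_integral_le_of_norm_le ht.1 (ae_of_all _ fun σ hσ => ?_)
    (hsub_int.const_mul _)
  exact ((hS_lip _).norm_sub_le _ _).trans <| by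
    simpa using (hG_lip σ ⟨hσ.1.le, hσ.2.trans ht.2⟩).norm_sub_le _ _

theorem exists_continuous_eqOn_duhamel (hS : Continuous (uncurry S))
    (hS_lip : ∀ t, LipschitzWith 1 (S t)) (hG : Continuous (uncurry G)) [CompleteSpace E]
    {K : ℝ≥0} {T : ℝ} (hT : 0 ≤ T) (hKT : K * T < 1)
    (hG_lip : ∀ τ ∈ Icc 0 T, LipschitzWith K (G τ)) (u₀ : E) :
    ∃ u : ℝ → E, Continuous u ∧ ∀ t ∈ Icc 0 T, u t = duhamel S G u₀ u t := by
  have hext : ∀ w : C(Icc 0 T, E), Continuous (IccExtend hT w) := fun w =>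
    w.continuous.Icc_extend'
  let Φ : C(Icc 0 T, E) → C(Icc 0 T, E) := fun w =>
    ⟨fun t => duhamel S G u₀ (IccExtend hT w) t,
      (continuous_duhamel hS hG u₀ (hext w)).comp continuous_subtype_val⟩
  have hΦ : ContractingWith (K * T.toNNReal) Φ := by
    refine ⟨by rwa [← NNReal.coe_lt_coe, NNReal.coe_mul, Real.coe_toNNReal _ hT],
      LipschitzWith.of_dist_le_mul fun w w' => ?_⟩
    rw [ContinuousMap.dist_le (by positivity)]
    intro t
    have hdist : ∀ σ, ‖IccExtend hT w σ - IccExtend hT w' σ‖ ≤ dist w w' := fun σ => by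
      rw [← dist_eq_norm]
      exact ContinuousMap.dist_apply_le_dist _
    have hint : ∫ σ in (0 : ℝ)..t, ‖IccExtend hT w σ - IccExtend hT w' σ‖ ≤ T * dist w w' := by
      refine (intervalIntegral.integral_mono_on t.2.1
        (((hext w).sub (hext w')).norm.intervalIntegrable _ _) intervalIntegrable_const
        fun σ _ => hdist σ).trans ?_
      rw [intervalIntegral.integral_const, smul_eq_mul, sub_zero]
      exact mul_le_mul_of_nonneg_right t.2.2 dist_nonneg
    rw [dist_eq_norm, NNReal.coe_mul, Real.coe_toNNReal _ hT, mul_assoc]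
    exact (norm_duhamel_sub_le hS hS_lip hG hG_lip u₀ (hext w).continuousOn
      (hext w').continuousOn t.2).trans (mul_le_mul_of_nonneg_left hint K.2)
  obtain ⟨w, hw⟩ : ∃ w, Φ w = w := ⟨_, hΦ.fixedPoint_isFixedPt⟩
  refine ⟨IccExtend hT w, hext w, fun t ht => ?_⟩
  rw [IccExtend_of_mem hT _ ht]
  exact (DFunLike.congr_fun hw ⟨t, ht⟩).symm

theorem exists_local_duhamel_solution (hS : Continuous (uncurry S))
    (hS_lip : ∀ t, LipschitzWith 1 (S t)) (hS_zero : ∀ t, S t 0 = 0) (hG : Continuous (uncurry G))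
    [CompleteSpace E] {K : ℝ≥0} {B : ℝ}
    (hG_bound : ∀ τ ∈ Icc 0 1, LipschitzWith K (G τ) ∧ ∀ a, ‖G τ a‖ ≤ B) (u₀ : E) :
    ∃ T, 0 < T ∧ ∃ u : ℝ → E, Continuous u ∧
      ∀ t ∈ Icc 0 T, u t = duhamel S G u₀ u t ∧ ‖u t‖ ≤ ‖u₀‖ + 1 := by
  have hB : 0 ≤ B := (norm_nonneg _).trans ((hG_bound 0 ⟨le_rfl, zero_le_one⟩).2 0)
  set T := 1 / (K + B + 1)
  have hT : 0 < T := by positivity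
  have hT1 : T ≤ 1 := div_le_one_of_le₀ (by linarith [K.2]) (by positivity)
  have hKT : K * T < 1 := by rw [mul_one_div, div_lt_one (by positivity)]; linarith
  have hBT : B * T ≤ 1 := by rw [mul_one_div, div_le_one (by positivity)]; linarith [K.2]
  have hG_T τ (hτ : τ ∈ Icc 0 T) := hG_bound τ ⟨hτ.1, hτ.2.trans hT1⟩
  obtain ⟨u, hu, hu_eq⟩ := exists_continuous_eqOn_duhamel hS hS_lip hG hT.le hKT
    (fun τ hτ => (hG_T τ hτ).1) u₀
  refine ⟨T, hT, u, hu, fun t ht => ⟨hu_eq t ht, ?_⟩⟩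
  rw [hu_eq t ht]
  refine (norm_duhamel_le hS_lip hS_zero (fun τ hτ => (hG_T τ hτ).2) u₀ u ht).trans ?_
  nlinarith [ht.2]

theorem eqOn_of_eqOn_duhamel (hS : Continuous (uncurry S)) (hS_lip : ∀ t, LipschitzWith 1 (S t))
    (hG : Continuous (uncurry G)) {K : ℝ≥0} {T : ℝ}
    (hG_lip : ∀ τ ∈ Icc 0 T, LipschitzWith K (G τ)) {u₀ : E} {u v : ℝ → E}
    (hu : ContinuousOn u (Icc 0 T)) (hv : ContinuousOn v (Icc 0 T))
    (hu_eq : ∀ t ∈ Icc 0 T, u t = duhamel S G u₀ u t)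
    (hv_eq : ∀ t ∈ Icc 0 T, v t = duhamel S G u₀ v t) : EqOn u v (Icc 0 T) := by
  have hzero := eqOn_zero_of_le_mul_integral (e := fun t => ‖u t - v t‖) (hu.sub hv).norm
    (fun _ _ => norm_nonneg _) fun t ht => by
      rw [hu_eq t ht, hv_eq t ht]
      exact norm_duhamel_sub_le hS hS_lip hG hG_lip u₀ hu hv ht
  exact fun t ht => sub_eq_zero.1 (norm_eq_zero.1 (hzero t ht))

end Duhamel

section BoundedContinuous

open scoped BoundedContinuousFunction

variable {X : Type*} [TopologicalSpace X]

theorem BoundedContinuousFunction.intervalIntegral_apply {F : ℝ → X →ᵇ ℝ} {a b : ℝ}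
    (hF : IntervalIntegrable F volume a b) (x : X) :
    (∫ σ in a..b, F σ) x = ∫ σ in a..b, F σ x :=
  ((BoundedContinuousFunction.evalCLM ℝ x).intervalIntegral_comp_comm hF).symm

theorem lipschitzWith_one_of_integral_kernel [MeasurableSpace X] [OpensMeasurableSpace X]
    {μ : Measure X} {k : X → X → ℝ} (hk_nonneg : ∀ x y, 0 ≤ k x y)
    (hk_one : ∀ x, ∫ y, k x y ∂μ = 1) {P : (X →ᵇ ℝ) → X →ᵇ ℝ}
    (hP : ∀ φ x, P φ x = ∫ y, k x y * φ y ∂μ) : LipschitzWith 1 P := by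
  have hk_int : ∀ x, Integrable (k x) μ := fun x =>
    Integrable.of_integral_ne_zero (by simp [hk_one])
  have hint : ∀ x (φ : X →ᵇ ℝ), Integrable (fun y => k x y * φ y) μ := fun x φ =>
    (hk_int x).mul_bdd φ.continuous.aestronglyMeasurable (ae_of_all _ φ.norm_coe_le_norm)
  refine LipschitzWith.of_dist_le_mul fun φ ψ => ?_
  rw [NNReal.coe_one, one_mul, BoundedContinuousFunction.dist_le dist_nonneg]
  intro x
  rw [dist_eq_norm, hP, hP, ← integral_sub (hint x φ) (hint x ψ)]
  calc ‖∫ y, k x y * φ y - k x y * ψ y ∂μ‖ ≤ ∫ y, k x y * dist φ ψ ∂μ := by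
        refine norm_integral_le_of_norm_le ((hk_int x).mul_const _) (ae_of_all _ fun y => ?_)
        rw [← mul_sub, norm_mul, Real.norm_of_nonneg (hk_nonneg x y), ← dist_eq_norm]
        exact mul_le_mul_of_nonneg_left (φ.dist_coe_le_dist y) (hk_nonneg x y)
    _ = dist φ ψ := by rw [integral_mul_const, hk_one, one_mul]

theorem lipschitzWith_one_and_map_zero_of_integral_kernel [MeasurableSpace X]
    [OpensMeasurableSpace X] {μ : Measure X} {k : X → X → ℝ → ℝ}
    {S : ℝ → (X →ᵇ ℝ) → X →ᵇ ℝ} (hS0 : ∀ φ, S 0 φ = φ)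
    (hS : ∀ φ t, 0 < t → ∀ x, S t φ x = ∫ y, k x y t * φ y ∂μ)
    (hk_nonneg : ∀ x y t, 0 < t → 0 ≤ k x y t) (hk_one : ∀ x t, 0 < t → ∫ y, k x y t ∂μ = 1)
    {t : ℝ} (ht : 0 ≤ t) : LipschitzWith 1 (S t) ∧ S t 0 = 0 := by
  obtain rfl | ht := ht.eq_or_lt
  · rw [show S 0 = id from funext hS0]
    exact ⟨LipschitzWith.id, rfl⟩
  · refine ⟨lipschitzWith_one_of_integral_kernel (fun x y => hk_nonneg x y t ht)
      (fun x => hk_one x t ht) (hS · t ht), ?_⟩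
    ext x
    simp [hS 0 t ht]

theorem LocallyLipschitz.exists_lipschitzWith_eqOn_Icc {f : ℝ → ℝ} (hf : LocallyLipschitz f)
    {m : ℝ} (hm : 0 ≤ m) : ∃ (K : ℝ≥0) (B : ℝ) (F : ℝ → ℝ),
      LipschitzWith K F ∧ (∀ s, ‖F s‖ ≤ B) ∧ EqOn F f (Icc (-m) m) := by
  have hm' : -m ≤ m := by linarith
  obtain ⟨K, hK⟩ := hf.locallyLipschitzOn.exists_lipschitzOnWith_of_compact
    (isCompact_Icc (a := -m) (b := m))
  obtain ⟨B, hB⟩ := (isCompact_Icc (a := -m) (b := m)).exists_bound_of_continuousOn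
    hf.continuous.continuousOn
  refine ⟨K, B, IccExtend hm' ((Icc (-m) m).domRestrict f), ?_,
    fun s => hB _ (projIcc _ _ hm' s).2, fun s hs => IccExtend_of_mem hm' _ hs⟩
  simpa [IccExtend] using (lipschitzOnWith_iff_restrict.1 hK).comp (LipschitzWith.projIcc hm')

/-- `G τ a = c (max τ 0) • F ∘ a`, where `F` agrees with `f` on `[-m, m]` and is constant
outside. -/
theorem exists_truncated_source {c f : ℝ → ℝ} (hc : ContinuousOn c (Ici 0))
    (hf : LocallyLipschitz f) {m : ℝ} (hm : 0 ≤ m) (R : ℝ) :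
    ∃ (G : ℝ → (X →ᵇ ℝ) → X →ᵇ ℝ) (K : ℝ≥0) (B : ℝ), Continuous (uncurry G) ∧
      (∀ τ ∈ Icc 0 R, LipschitzWith K (G τ) ∧ ∀ a, ‖G τ a‖ ≤ B) ∧
      ∀ τ, 0 ≤ τ → ∀ a : X →ᵇ ℝ, ‖a‖ ≤ m → ∀ y, G τ a y = c τ * f (a y) := by
  obtain ⟨K, B, F, hF_lip, hF_le, hF_eq⟩ := hf.exists_lipschitzWith_eqOn_Icc hm
  have hc' : Continuous fun τ => c (max τ 0) :=
    hc.comp_continuous (continuous_id.max continuous_const) fun τ => le_max_right τ 0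
  have hF_comp := BoundedContinuousFunction.lipschitz_comp (α := X) hF_lip
  obtain ⟨C, hC⟩ := (isCompact_Icc (a := 0) (b := R)).exists_bound_of_continuousOn
    hc'.continuousOn
  have hB : 0 ≤ B := (norm_nonneg _).trans (hF_le 0)
  refine ⟨fun τ a => c (max τ 0) • a.comp F hF_lip, C.toNNReal * K, C * B,
    (hc'.comp continuous_fst).smul (hF_comp.continuous.comp continuous_snd),
    fun τ hτ => ⟨?_, fun a => ?_⟩, fun τ hτ a ha y => ?_⟩
  · refine ((lipschitzWith_smul _).comp hF_comp).weaken ?_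
    gcongr
    rw [← NNReal.coe_le_coe, coe_nnnorm, Real.coe_toNNReal']
    exact (hC τ hτ).trans (le_max_left _ _)
  · rw [norm_smul]
    exact mul_le_mul (hC τ hτ) ((BoundedContinuousFunction.norm_le hB).2 fun y => hF_le _)
      (norm_nonneg _) ((norm_nonneg _).trans (hC τ hτ))
  · have hy : a y ∈ Icc (-m) m := abs_le.1 ((a.norm_coe_le_norm y).trans ha)
    simp [max_eq_left hτ, hF_eq hy]

theorem exists_truncated_nonlinearity {h l f g : ℝ → ℝ} (hh : ContinuousOn h (Ici 0))
    (hl : ContinuousOn l (Ici 0)) (hf : LocallyLipschitz f) (hg : LocallyLipschitz g) {m : ℝ}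
    (hm : 0 ≤ m) (R : ℝ) :
    ∃ (G : ℝ → (X →ᵇ ℝ) → X →ᵇ ℝ) (K : ℝ≥0) (B : ℝ), Continuous (uncurry G) ∧
      (∀ τ ∈ Icc 0 R, LipschitzWith K (G τ) ∧ ∀ a, ‖G τ a‖ ≤ B) ∧
      ∀ τ, 0 ≤ τ → ∀ a : X →ᵇ ℝ, ‖a‖ ≤ m → ∀ y, G τ a y = h τ * f (a y) + l τ * g (a y) := by
  obtain ⟨G₁, K₁, B₁, hG₁, hG₁_R, hG₁_eq⟩ := exists_truncated_source (X := X) hh hf hm R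
  obtain ⟨G₂, K₂, B₂, hG₂, hG₂_R, hG₂_eq⟩ := exists_truncated_source (X := X) hl hg hm R
  refine ⟨fun τ a => G₁ τ a + G₂ τ a, K₁ + K₂, B₁ + B₂, hG₁.add hG₂, fun τ hτ =>
    ⟨(hG₁_R τ hτ).1.add (hG₂_R τ hτ).1, fun a => norm_add_le_of_le ((hG₁_R τ hτ).2 a)
      ((hG₂_R τ hτ).2 a)⟩, fun τ hτ a ha y => ?_⟩
  simp [hG₁_eq τ hτ a ha y, hG₂_eq τ hτ a ha y]

end BoundedContinuous

theorem isMildOnIcc_iff_eqOn_duhamel {N : ℕ} {Γ : EucN N → EucN N → ℝ → ℝ}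
    {S G : ℝ → CbN N → CbN N} {h l f g : ℝ → ℝ} {u₀ : CbN N} {T m : ℝ} {u : ℝ → CbN N}
    (hS0 : ∀ φ, S 0 φ = φ) (hSΓ : ∀ φ t, 0 < t → ∀ x, S t φ x = ∫ y, Γ x y t * φ y)
    (hS : Continuous (uncurry S)) (hG : Continuous (uncurry G))
    (hG_eq : ∀ τ, 0 ≤ τ → ∀ a : CbN N, ‖a‖ ≤ m → ∀ y, G τ a y = h τ * f (a y) + l τ * g (a y))
    (hT : 0 ≤ T) (hu : ContinuousOn u (Icc 0 T)) (hu_le : ∀ t ∈ Icc 0 T, ‖u t‖ ≤ m) :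
    IsMildOnIcc N Γ h l f g u₀ T u ↔ ∀ t ∈ Icc 0 T, u t = duhamel S G u₀ u t := by
  have h_zero : duhamel S G u₀ u 0 = u₀ := by simp [duhamel, hS0]
  have h_apply : ∀ t ∈ Ioc 0 T, ∀ x, duhamel S G u₀ u t x = (∫ y, Γ x y t * u₀ y) +
      ∫ σ in (0 : ℝ)..t, ∫ y, Γ x y (t - σ) * (h σ * f (u σ y) + l σ * g (u σ y)) := by
    intro t ht x
    rw [duhamel, BoundedContinuousFunction.add_apply, hSΓ _ _ ht.1,
      BoundedContinuousFunction.intervalIntegral_apply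
        (intervalIntegrable_duhamel_integrand hS hG hu ⟨ht.1.le, ht.2⟩),
      intervalIntegral.integral_of_le ht.1.le, intervalIntegral.integral_of_le ht.1.le,
      integral_Ioc_eq_integral_Ioo, integral_Ioc_eq_integral_Ioo]
    congr 1
    refine setIntegral_congr_fun measurableSet_Ioo fun σ hσ => ?_
    simp only [hSΓ _ _ (sub_pos.2 hσ.2),
      hG_eq σ hσ.1.le (u σ) (hu_le σ ⟨hσ.1.le, hσ.2.le.trans ht.2⟩)]
  constructor
  · rintro ⟨-, hu0, hu_mild⟩ t ht
    obtain rfl | ht0 := ht.1.eq_or_lt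
    · rw [hu0, h_zero]
    · ext x
      rw [hu_mild t ⟨ht0, ht.2⟩ x, h_apply t ⟨ht0, ht.2⟩ x]
  · intro hu_eq
    refine ⟨hu, (hu_eq 0 ⟨le_rfl, hT⟩).trans h_zero, fun t ht x => ?_⟩
    rw [hu_eq t ⟨ht.1.le, ht.2⟩, h_apply t ht x]

theorem local_existence_uniqueness_general
    (N : ℕ) (α : ℝ)
    (Γ : EucN N → EucN N → ℝ → ℝ)
    (c₀ : ℝ)
    (hK1y : ∀ (x : EucN N) (t : ℝ), 0 < t → ∫ y, Γ x y t = 1)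
    (hK5 : ∀ (x y : EucN N) (t : ℝ), 0 < t →
      0 < Γ x y t ∧ Γ x y t ≤ c₀ * t ^ (-(N : ℝ) / (2 - α)))
    (S : ℝ → CbN N → CbN N)
    (hS0 : ∀ φ, S 0 φ = φ)
    (hSΓ : ∀ (φ : CbN N) (t : ℝ), 0 < t → ∀ x, S t φ x = ∫ y, Γ x y t * φ y)
    (hK4 : ∀ φ : CbN N, ContinuousOn (fun t => S t φ) (Ici (0 : ℝ)))
    (h l : ℝ → ℝ)
    (hhcont : ContinuousOn h (Ici 0)) (hlcont : ContinuousOn l (Ici 0))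
    (f g : ℝ → ℝ)
    (hfLip : LocallyLipschitz f) (hgLip : LocallyLipschitz g) :
    ∀ u₀ : CbN N, ∃ T : ℝ, 0 < T ∧ ∃ u : ℝ → CbN N,
      IsMildOnIcc N Γ h l f g u₀ T u ∧
      ∀ v : ℝ → CbN N, IsMildOnIcc N Γ h l f g u₀ T v →
        ∀ t ∈ Icc (0 : ℝ) T, v t = u t := by
  intro u₀
  have hS t (ht : 0 ≤ t) := lipschitzWith_one_and_map_zero_of_integral_kernel hS0 hSΓ
    (fun x y t ht => (hK5 x y t ht).1.le) hK1y ht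
  -- extended to negative times by `S 0 = id`, `S` becomes jointly continuous on `ℝ × C_b(ℝ^N)`
  set S' : ℝ → CbN N → CbN N := fun t => S (max t 0)
  have hS'_cont : Continuous (uncurry S') :=
    continuous_uncurry_max_zero hK4 fun t ht => (hS t ht).1
  have hS'_lip t : LipschitzWith 1 (S' t) := (hS _ (le_max_right t 0)).1
  have hS'_zero t : S' t 0 = 0 := (hS _ (le_max_right t 0)).2
  have hS'0 φ : S' 0 φ = φ := by simp [S', hS0]
  have hS'Γ φ t (ht : 0 < t) x : S' t φ x = ∫ y, Γ x y t * φ y := by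
    simp [S', max_eq_left ht.le, hSΓ φ t ht]
  set M := ‖u₀‖ + 1
  obtain ⟨G, K, B, hG, hG_bound, hG_eq⟩ := exists_truncated_nonlinearity (X := EucN N)
    hhcont hlcont hfLip hgLip (m := M) (by positivity) 1
  obtain ⟨T, hT, u, hu, hu_eq⟩ := exists_local_duhamel_solution hS'_cont hS'_lip hS'_zero hG
    hG_bound u₀
  have hu_mild := (isMildOnIcc_iff_eqOn_duhamel hS'0 hS'Γ hS'_cont hG hG_eq hT.le
    hu.continuousOn fun t ht => (hu_eq t ht).2).2 fun t ht => (hu_eq t ht).1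
  refine ⟨T, hT, u, hu_mild, fun v hv => ?_⟩
  obtain ⟨C, hC⟩ := isCompact_Icc.exists_bound_of_continuousOn hv.1
  obtain ⟨G', K', _, hG', hG'_lip, hG'_eq⟩ := exists_truncated_nonlinearity (X := EucN N)
    hhcont hlcont hfLip hgLip (m := max M C) (by positivity) T
  have hmild_iff := fun {w : ℝ → CbN N} => isMildOnIcc_iff_eqOn_duhamel (u := w) (u₀ := u₀)
    hS'0 hS'Γ hS'_cont hG' hG'_eq hT.le
  exact eqOn_of_eqOn_duhamel hS'_cont hS'_lip hG' (fun τ hτ => (hG'_lip τ hτ).1) hv.1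
    hu.continuousOn ((hmild_iff hv.1 fun s hs => (hC s hs).trans (le_max_right _ _)).1 hv)
    ((hmild_iff hu.continuousOn fun s hs => (hu_eq s hs).2.trans (le_max_left _ _)).1 hu_mild)

/-- Lemma 2.6: local existence and uniqueness of mild solutions. -/
theorem local_existence_uniqueness
    (N : ℕ) (hN : 1 ≤ N) (α : ℝ) (hα0 : 0 ≤ α) (hα1 : α < 1)
    (Γ : EucN N → EucN N → ℝ → ℝ)
    (hΓmeas : Measurable fun p : EucN N × EucN N × ℝ => Γ p.1 p.2.1 p.2.2)
    (c₀ : ℝ) (hc₀ : 0 < c₀)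
    (hK1y : ∀ (x : EucN N) (t : ℝ), 0 < t → ∫ y, Γ x y t = 1)
    (hK1x : ∀ (y : EucN N) (t : ℝ), 0 < t → ∫ x, Γ x y t = 1)
    (hK2 : ∀ (x y : EucN N) (s t : ℝ), 0 < s → s < t →
      Γ x y t = ∫ ξ, Γ x ξ (t - s) * Γ ξ y s)
    (hK5 : ∀ (x y : EucN N) (t : ℝ), 0 < t →
      0 < Γ x y t ∧ Γ x y t ≤ c₀ * t ^ (-(N : ℝ) / (2 - α)))
    (S : ℝ → CbN N → CbN N)
    (hS0 : ∀ φ, S 0 φ = φ)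
    (hSΓ : ∀ (φ : CbN N) (t : ℝ), 0 < t → ∀ x, S t φ x = ∫ y, Γ x y t * φ y)
    (hK4 : ∀ φ : CbN N, ContinuousOn (fun t => S t φ) (Ici (0 : ℝ)))
    (h l : ℝ → ℝ)
    (hhcont : ContinuousOn h (Ici 0)) (hlcont : ContinuousOn l (Ici 0))
    (hhnn : ∀ t, 0 ≤ t → 0 ≤ h t) (hlnn : ∀ t, 0 ≤ t → 0 ≤ l t)
    (f g : ℝ → ℝ)
    (hfLip : LocallyLipschitz f) (hgLip : LocallyLipschitz g)
    (hfnn : ∀ s : ℝ, 0 ≤ f s) (hgnn : ∀ s : ℝ, 0 ≤ g s) :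
    ∀ u₀ : CbN N, ∃ T : ℝ, 0 < T ∧ ∃ u : ℝ → CbN N,
      IsMildOnIcc N Γ h l f g u₀ T u ∧
      ∀ v : ℝ → CbN N, IsMildOnIcc N Γ h l f g u₀ T v →
        ∀ t ∈ Icc (0 : ℝ) T, v t = u t :=
  local_existence_uniqueness_general N α Γ c₀ hK1y hK5 S hS0 hSΓ hK4 h l hhcont hlcont f g hfLip
    hgLip
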